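/- Let N be a 1-safe Petri net and let places p1,…,pi (not in vertex cover VC) all have the same VC-interface I. In any run from the initial marking: as long as some pj holds a token, no tokens can be added to any of p1,…,pi; hence the total number of transition firings along any run that remove a token from one of p1,…,pi, before the first marking where all of p1,…,pi are empty, is at most the number of these places initially marked. -/

import Mathlib

/-- A Petri net: places `P`, transitions `T`, incidence functions. -/
structure PetriNet (P T : Type) where
  Pre : P → T → ℕ
  Post : P → T → ℕ

variable {P T : Type}

def enabled (N : PetriNet P T) (M : P → ℕ) (t : T) : Prop := ∀ p, N.Pre p t ≤ M p

def fire (N : PetriNet P T) (M : P → ℕ) (t : T) : P → ℕ :=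
  fun p => M p - N.Pre p t + N.Post p t

def step (N : PetriNet P T) (M M' : P → ℕ) : Prop :=
  ∃ t, enabled N M t ∧ M' = fire N M t

def reachable (N : PetriNet P T) (M0 M : P → ℕ) : Prop :=
  Relation.ReflTransGen (step N) M0 M

/-- `1`-safety: every reachable marking has at most one token per place. -/
def oneSafe (N : PetriNet P T) (M0 : P → ℕ) : Prop :=
  ∀ M, reachable N M0 M → ∀ p, M p ≤ 1

def incident (N : PetriNet P T) (p : P) (t : T) : Prop := 1 ≤ N.Pre p t + N.Post p t

/-- The flow graph of a Petri net (with a self loop at `p` when `p` is both an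
input and an output place of some transition). -/
def flowAdj (N : PetriNet P T) (p1 p2 : P) : Prop :=
  (p1 ≠ p2 ∧ ∃ t, incident N p1 t ∧ incident N p2 t) ∨
  (p1 = p2 ∧ ∃ t, N.Pre p1 t = 1 ∧ N.Post p1 t = 1)

def isVertexCover (N : PetriNet P T) (VC : Set P) : Prop :=
  ∀ p1 p2, flowAdj N p1 p2 → p1 ∈ VC ∨ p2 ∈ VC

/-- The `VC`-neighbourhood of a transition: its input and output places inside `VC`. -/
def nbhd (N : PetriNet P T) (VC : Set P) (t : T) : Set P × Set P :=
  ({p | p ∈ VC ∧ N.Pre p t = 1}, {p | p ∈ VC ∧ N.Post p t = 1})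

def effect (N : PetriNet P T) (p : P) (t : T) : ℤ :=
  (N.Post p t : ℤ) - (N.Pre p t : ℤ)

/-- The `VC`-interface of a place: for each neighbourhood, the set of net effects
`w ∈ {1, -1}` realized on `p` by transitions of that neighbourhood. -/
def interface (N : PetriNet P T) (VC : Set P) (p : P) : Set P × Set P → Set ℤ :=
  fun nb => {w | (w = 1 ∨ w = -1) ∧ ∃ t, nbhd N VC t = nb ∧ effect N p t = w}

/-!
While some place `q ∈ S` is marked, no enabled transition `t` can put a token on a place
`p ∈ S`: that would make `+1` an effect in the common interface at `nbhd t`, realized on `q`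
by some `t'` with the same `VC`-neighbourhood. As `q ∉ VC`, every input place of `t'` lies in
`VC`, so `t'` is enabled wherever `t` is, and firing it would put a second token on `q`.
Hence the number of tokens on `S` never grows, and each removal strictly lowers it.
-/

section Run

variable {N : PetriNet P T}

theorem reachable_of_run {M0 : P → ℕ} {M : ℕ → P → ℕ} {τ : ℕ → T} (h0 : M 0 = M0)
    (hstep : ∀ j, enabled N (M j) (τ j) ∧ M (j + 1) = fire N (M j) (τ j)) (j : ℕ) :
    reachable N M0 (M j) := by
  induction j with
  | zero => exact h0 ▸ Relation.ReflTransGen.refl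
  | succ j ih => exact ih.tail ⟨τ j, hstep j⟩

theorem effect_eq_one_iff {p : P} {t : T} (h : N.Pre p t ≤ 1 ∧ N.Post p t ≤ 1) :
    effect N p t = 1 ↔ N.Pre p t = 0 ∧ N.Post p t = 1 := by
  unfold effect
  omega

theorem mem_of_isVertexCover {VC : Set P} (hvc : isVertexCover N VC) {p q : P} {t : T}
    (hq : q ∉ VC) (hqt : incident N q t) (hpt : incident N p t) (hpq : p ≠ q) : p ∈ VC :=
  (hvc p q (Or.inl ⟨hpq, t, hpt, hqt⟩)).resolve_right hq

theorem enabled_of_nbhd_eq {VC : Set P} {M : P → ℕ} {t t' : T}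
    (hnb : nbhd N VC t' = nbhd N VC t) (ht : enabled N M t)
    (hpre_le : ∀ p, N.Pre p t' ≤ 1) (hpre_mem : ∀ p, N.Pre p t' ≠ 0 → p ∈ VC) :
    enabled N M t' := by
  intro p
  by_cases hp0 : N.Pre p t' = 0
  · simp [hp0]
  · have hp1 : N.Pre p t' = 1 := by have := hpre_le p; omega
    have hmem : p ∈ (nbhd N VC t).1 := hnb ▸ ⟨hpre_mem p hp0, hp1⟩
    exact hp1 ▸ hmem.2 ▸ ht p

theorem not_adds_of_marked_of_interface_eq (h01 : ∀ p t, N.Pre p t ≤ 1 ∧ N.Post p t ≤ 1)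
    {M0 : P → ℕ} (hsafe : oneSafe N M0) {VC : Set P} (hvc : isVertexCover N VC)
    {M : P → ℕ} (hM : reachable N M0 M) {t : T} (ht : enabled N M t) {p q : P}
    (hq : q ∉ VC) (hqM : M q = 1) (hpq : interface N VC p = interface N VC q) :
    ¬ (N.Pre p t = 0 ∧ N.Post p t = 1) := by
  intro hadd
  have hone : (1 : ℤ) ∈ interface N VC q (nbhd N VC t) :=
    hpq ▸ ⟨Or.inl rfl, t, rfl, (effect_eq_one_iff (h01 p t)).2 hadd⟩
  obtain ⟨-, t', hnb, heff⟩ := hone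
  obtain ⟨hq0, hq1⟩ := (effect_eq_one_iff (h01 q t')).1 heff
  have hen : enabled N M t' :=
    enabled_of_nbhd_eq hnb ht (fun p => (h01 p t').1) fun p hp =>
      mem_of_isVertexCover (t := t') hvc hq (by unfold incident; omega) (by unfold incident; omega)
        (by rintro rfl; exact hp hq0)
  have := hsafe _ (hM.tail ⟨t', hen, rfl⟩) q
  simp [fire, hq0, hq1, hqM] at this

theorem fire_le_of_not_adds {M : P → ℕ} {t : T} {p : P} (hen : N.Pre p t ≤ M p)
    (h01 : N.Pre p t ≤ 1 ∧ N.Post p t ≤ 1) (hna : ¬ (N.Pre p t = 0 ∧ N.Post p t = 1)) :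
    fire N M t p ≤ M p := by
  unfold fire
  omega

theorem fire_lt_of_removes {M : P → ℕ} {t : T} {p : P} (hen : N.Pre p t ≤ M p)
    (hrem : N.Pre p t = 1 ∧ N.Post p t = 0) : fire N M t p < M p := by
  unfold fire
  omega

end Run

theorem card_filter_range_add_le_of_decreasing {F : ℕ → ℕ} {R : ℕ → Prop} [DecidablePred R]
    {n : ℕ} (hmono : ∀ j < n, F (j + 1) ≤ F j) (hstrict : ∀ j < n, R j → F (j + 1) < F j) :
    ((Finset.range n).filter R).card + F n ≤ F 0 := by
  induction n with
  | zero => simp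
  | succ m ih =>
    have ih' := ih (fun j hj => hmono j (by omega)) (fun j hj => hstrict j (by omega))
    rw [Finset.range_add_one, Finset.filter_insert]
    by_cases hr : R m
    · rw [if_pos hr, Finset.card_insert_of_notMem (by simp)]
      have := hstrict m (by omega) hr
      omega
    · rw [if_neg hr]
      have := hmono m (by omega)
      omega

theorem Finset.sum_eq_card_filter_eq_one {α : Type*} {s : Finset α} {m : α → ℕ}
    (hm : ∀ a ∈ s, m a ≤ 1) : ∑ a ∈ s, m a = (s.filter (m · = 1)).card := by
  rw [Finset.card_filter]
  refine Finset.sum_congr rfl fun a ha => ?_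
  have := hm a ha
  split <;> omega

theorem ncard_removals_le_sum {N : PetriNet P T} (h01 : ∀ p t, N.Pre p t ≤ 1 ∧ N.Post p t ≤ 1)
    (s : Finset P) {M : ℕ → P → ℕ} {τ : ℕ → T}
    (hstep : ∀ j, enabled N (M j) (τ j) ∧ M (j + 1) = fire N (M j) (τ j)) {n : ℕ}
    (hnoadd : ∀ j < n, ∀ p ∈ s, ¬ (N.Pre p (τ j) = 0 ∧ N.Post p (τ j) = 1)) :
    Set.ncard {j | j < n ∧ ∃ p ∈ s, N.Pre p (τ j) = 1 ∧ N.Post p (τ j) = 0} ≤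
      ∑ p ∈ s, M 0 p := by
  have hle : ∀ j < n, ∀ p ∈ s, M (j + 1) p ≤ M j p := fun j hj p hp =>
    (hstep j).2 ▸ fire_le_of_not_adds ((hstep j).1 p) (h01 p (τ j)) (hnoadd j hj p hp)
  have hcount := card_filter_range_add_le_of_decreasing (F := fun j => ∑ p ∈ s, M j p)
    (R := fun j => ∃ p ∈ s, N.Pre p (τ j) = 1 ∧ N.Post p (τ j) = 0)
    (fun j hj => Finset.sum_le_sum (hle j hj))
    (fun j hj ⟨p, hp, hrem⟩ => Finset.sum_lt_sum (hle j hj)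
      ⟨p, hp, (hstep j).2 ▸ fire_lt_of_removes ((hstep j).1 p) hrem⟩)
  have hset : {j | j < n ∧ ∃ p ∈ s, N.Pre p (τ j) = 1 ∧ N.Post p (τ j) = 0} =
      ↑((Finset.range n).filter fun j => ∃ p ∈ s, N.Pre p (τ j) = 1 ∧ N.Post p (τ j) = 0) := by
    ext j
    simp
  rw [hset, Set.ncard_coe_finset]
  omega

/-- In a 1-safe net, for a finite set `S` of places outside the vertex cover that all
share the same `VC`-interface, along any run: as long as some place of `S` is marked
(positions `j < n`), no transition fired adds a token to a place of `S`, and the number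
of firings removing a token from a place of `S` before position `n` is at most the
number of places of `S` marked initially. -/
theorem same_interface_removals_bounded
    (N : PetriNet P T) (M0 : P → ℕ)
    (h01 : ∀ p t, N.Pre p t ≤ 1 ∧ N.Post p t ≤ 1)
    (hsafe : oneSafe N M0)
    (VC : Set P) (hvc : isVertexCover N VC)
    (S : Set P) (hSfin : S.Finite) (hout : ∀ p ∈ S, p ∉ VC)
    (hintf : ∀ p ∈ S, ∀ p' ∈ S, interface N VC p = interface N VC p')
    (M : ℕ → P → ℕ) (τ : ℕ → T) (h0 : M 0 = M0)
    (hstep : ∀ j, enabled N (M j) (τ j) ∧ M (j + 1) = fire N (M j) (τ j))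
    (n : ℕ) (hn : ∀ j < n, ∃ p ∈ S, M j p = 1) :
    (∀ j < n, ∀ p ∈ S, ¬ (N.Pre p (τ j) = 0 ∧ N.Post p (τ j) = 1)) ∧
    Set.ncard {j | j < n ∧ ∃ p ∈ S, N.Pre p (τ j) = 1 ∧ N.Post p (τ j) = 0} ≤
      Set.ncard {p | p ∈ S ∧ M0 p = 1} := by
  have hnoadd : ∀ j < n, ∀ p ∈ S, ¬ (N.Pre p (τ j) = 0 ∧ N.Post p (τ j) = 1) := by
    intro j hj p hp
    obtain ⟨q, hq, hqM⟩ := hn j hj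
    exact not_adds_of_marked_of_interface_eq h01 hsafe hvc (reachable_of_run h0 hstep j)
      (hstep j).1 (hout q hq) hqM (hintf p hp q hq)
  refine ⟨hnoadd, ?_⟩
  lift S to Finset P using hSfin
  have hM0 : ∀ p ∈ S, M 0 p ≤ 1 := fun p _ => hsafe _ (reachable_of_run h0 hstep 0) p
  calc _ ≤ ∑ p ∈ S, M 0 p := ncard_removals_le_sum h01 S hstep hnoadd
    _ = (S.filter (M 0 · = 1)).card := Finset.sum_eq_card_filter_eq_one hM0
    _ = Set.ncard {p | p ∈ (S : Set P) ∧ M0 p = 1} := by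
      rw [← h0, ← Set.ncard_coe_finset, Finset.coe_filter]
      rfl
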